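/- arXiv:1208.4493 — 11 statements merged into one kernel-verified Lean document; each statement's English description precedes it below -/
import Mathlib

section
/- An invertible real D×D matrix M can be written as M = λs, where λ is a Lorentz matrix (λᵗηλ = η with η = diag(-1,1,...,1)) and s is a symmetric matrix, if and only if the matrix ηMᵗηM has a real square root that can be written as η times a symmetric matrix. -/
open Matrix

/-
With `B = η s`, the identity `B² = η Mᵀ η M` is equivalent to `s η s = Mᵀ η M`. If `M = Λ s`
with `Λ` Lorentz, this holds because `(Λ s)ᵀ η (Λ s) = s (Λᵀ η Λ) s = s η s`. Conversely, taking
determinants shows that `s` is invertible, and then `Λ = M s⁻¹` satisfies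
`Λᵀ η Λ = s⁻¹ (s η s) s⁻¹ = η`.
-/

namespace Matrix

variable {n R : Type*} [Fintype n] [CommRing R]

theorem transpose_mul_mul_self_of_lorentz_mul_symm {η Λ s : Matrix n n R}
    (hΛ : Λᵀ * η * Λ = η) (hs : sᵀ = s) : (Λ * s)ᵀ * η * (Λ * s) = s * η * s := by
  conv_rhs => rw [← hΛ]
  rw [transpose_mul, hs]
  simp only [Matrix.mul_assoc]

variable [DecidableEq n]

theorem lorentz_mul_nonsing_inv {η M s : Matrix n n R} (hs : sᵀ = s) (hsdet : IsUnit s.det)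
    (h : s * η * s = Mᵀ * η * M) : (M * s⁻¹)ᵀ * η * (M * s⁻¹) = η := by
  calc (M * s⁻¹)ᵀ * η * (M * s⁻¹) = s⁻¹ * (Mᵀ * η * M) * s⁻¹ := by
        rw [transpose_mul, transpose_nonsing_inv, hs]
        simp only [Matrix.mul_assoc]
    _ = s⁻¹ * s * η * (s * s⁻¹) := by
        rw [← h]
        simp only [Matrix.mul_assoc]
    _ = η := by
        rw [nonsing_inv_mul _ hsdet, mul_nonsing_inv _ hsdet, Matrix.one_mul, Matrix.mul_one]

theorem isUnit_det_of_mul_mul_eq {η M s : Matrix n n R} (hM : IsUnit M.det)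
    (hη : IsUnit η.det) (h : s * η * s = Mᵀ * η * M) : IsUnit s.det := by
  have hsηs : IsUnit (s.det * η.det * s.det) := by
    rw [← det_mul, ← det_mul, h, det_mul, det_mul, det_transpose]
    exact (hM.mul hη).mul hM
  exact isUnit_of_mul_isUnit_right hsηs

theorem exists_lorentz_mul_symm_iff {η M : Matrix n n R} (hη : IsUnit η.det)
    (hM : IsUnit M.det) :
    (∃ Λ s : Matrix n n R, Λᵀ * η * Λ = η ∧ sᵀ = s ∧ M = Λ * s) ↔
      ∃ B : Matrix n n R, B * B = η * Mᵀ * η * M ∧ ∃ s : Matrix n n R, sᵀ = s ∧ B = η * s := by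
  have sq_iff (s : Matrix n n R) :
      η * s * (η * s) = η * Mᵀ * η * M ↔ s * η * s = Mᵀ * η * M := by
    simp only [Matrix.mul_assoc]
    exact ((isUnit_iff_isUnit_det η).mpr hη).mul_right_inj
  constructor
  · rintro ⟨Λ, s, hΛ, hs, rfl⟩
    exact ⟨η * s, (sq_iff s).mpr (transpose_mul_mul_self_of_lorentz_mul_symm hΛ hs).symm,
      s, hs, rfl⟩
  · rintro ⟨B, hB, s, hs, rfl⟩
    have h := (sq_iff s).mp hB
    have hsdet := isUnit_det_of_mul_mul_eq hM hη h
    refine ⟨M * s⁻¹, s, lorentz_mul_nonsing_inv hs hsdet h, hs, ?_⟩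
    rw [Matrix.mul_assoc, nonsing_inv_mul _ hsdet, Matrix.mul_one]

end Matrix

theorem stmt_0 (D : ℕ) (M : Matrix (Fin D) (Fin D) ℝ) (hM : IsUnit M.det)
    (η : Matrix (Fin D) (Fin D) ℝ)
    (hη : η = Matrix.diagonal (fun i : Fin D => if (i : ℕ) = 0 then (-1 : ℝ) else 1)) :
    (∃ (Λ s : Matrix (Fin D) (Fin D) ℝ), Λᵀ * η * Λ = η ∧ sᵀ = s ∧ M = Λ * s) ↔
    (∃ B : Matrix (Fin D) (Fin D) ℝ, B * B = η * Mᵀ * η * M ∧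
      ∃ s : Matrix (Fin D) (Fin D) ℝ, sᵀ = s ∧ B = η * s) := by
  have hηdet : IsUnit η.det := by
    rw [hη, det_diagonal]
    exact IsUnit.prod_univ_iff.mpr fun i => by split_ifs <;> norm_num
  exact exists_lorentz_mul_symm_iff hηdet hM
end

section
/- Conversely, if s is a symmetric invertible real matrix with (ηs)² = ηMᵗηM for an invertible real matrix M, then λ := Ms⁻¹ satisfies λᵗηλ = η, i.e., λ is a Lorentz matrix, and M = λs. -/
open Matrix

theorem stmt_2 (D : ℕ) (η M s : Matrix (Fin D) (Fin D) ℝ)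
    (hη : η = Matrix.diagonal (fun i : Fin D => if (i : ℕ) = 0 then (-1 : ℝ) else 1))
    (hM : IsUnit M.det) (hs : sᵀ = s) (hsinv : IsUnit s.det)
    (hsq : (η * s) * (η * s) = η * Mᵀ * η * M) :
    (M * s⁻¹)ᵀ * η * (M * s⁻¹) = η ∧ M = (M * s⁻¹) * s := by
  have hη2 : η * η = 1 := by
    subst hη
    rw [Matrix.diagonal_mul_diagonal]
    convert Matrix.diagonal_one
    rename_i i
    by_cases h : (i : ℕ) = 0 <;> simp [h]
  have key : s * η * s = Mᵀ * η * M := by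
    have := congrArg (fun X => η * X) hsq
    simp only [← mul_assoc] at this
    rwa [hη2, one_mul, one_mul] at this
  constructor
  · have hts : s⁻¹ᵀ = s⁻¹ := by rw [Matrix.transpose_nonsing_inv, hs]
    calc (M * s⁻¹)ᵀ * η * (M * s⁻¹)
        = s⁻¹ * (Mᵀ * η * M) * s⁻¹ := by
          rw [Matrix.transpose_mul, hts]; noncomm_ring
      _ = s⁻¹ * (s * η * s) * s⁻¹ := by rw [key]
      _ = (s⁻¹ * s) * η * (s * s⁻¹) := by noncomm_ring
      _ = η := by rw [Matrix.nonsing_inv_mul _ hsinv, Matrix.mul_nonsing_inv _ hsinv,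
            one_mul, mul_one]
  · rw [mul_assoc, Matrix.nonsing_inv_mul _ hsinv, mul_one]
end

section
/- Conversely, if γ is a real matrix with γ² = g⁻¹f and fγ symmetric, then for any invertible L with LᵗηL = f, the matrix E := Lγ⁻¹ satisfies EᵗηE = g (i.e., (γ⁻¹)ᵗ f γ⁻¹ = g), and Eg⁻¹Lᵗ is symmetric. -/
open Matrix

theorem stmt_7 (D : ℕ) (η g f γ L : Matrix (Fin D) (Fin D) ℝ)
    (hη : η = Matrix.diagonal (fun i : Fin D => if (i : ℕ) = 0 then (-1 : ℝ) else 1))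
    (hg : gᵀ = g) (hginv : IsUnit g.det)
    (hf : fᵀ = f) (hfinv : IsUnit f.det)
    (hγinv : IsUnit γ.det) (hγ : γ * γ = g⁻¹ * f) (hfγ : (f * γ)ᵀ = f * γ)
    (hL : IsUnit L.det) (hLf : Lᵀ * η * L = f) :
    (L * γ⁻¹)ᵀ * η * (L * γ⁻¹) = g ∧
    ((L * γ⁻¹) * g⁻¹ * Lᵀ)ᵀ = (L * γ⁻¹) * g⁻¹ * Lᵀ := by
  have hγγ : γ * γ⁻¹ = 1 := Matrix.mul_nonsing_inv γ hγinv
  have hγγ' : γ⁻¹ * γ = 1 := Matrix.nonsing_inv_mul γ hγinv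
  have h1 : γᵀ * f = f * γ := by
    calc γᵀ * f = γᵀ * fᵀ := by rw [hf]
    _ = (f * γ)ᵀ := by rw [transpose_mul]
    _ = f * γ := hfγ
  have h2 : g * γ * γ = f := by
    rw [mul_assoc, hγ, ← mul_assoc, Matrix.mul_nonsing_inv g hginv, one_mul]
  have h3 : f * γ⁻¹ = g * γ := by
    rw [← h2, mul_assoc, mul_assoc, hγγ, mul_one]
  have h4 : g = f * γ⁻¹ * γ⁻¹ := by
    rw [h3, mul_assoc, hγγ, mul_one]
  have h5 : γᵀ * g = g * γ := by
    calc γᵀ * g = γᵀ * f * γ⁻¹ * γ⁻¹ := by rw [h4, ← mul_assoc, ← mul_assoc]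
    _ = f * (γ * γ⁻¹) * γ⁻¹ := by rw [h1, mul_assoc f γ γ⁻¹]
    _ = f * γ⁻¹ := by rw [hγγ, mul_one]
    _ = g * γ := h3
  have h6 : (γ⁻¹)ᵀ * f = f * γ⁻¹ := by
    have key : γᵀ * (f * γ⁻¹) = f := by
      rw [← mul_assoc, h1, mul_assoc, hγγ, mul_one]
    rw [Matrix.transpose_nonsing_inv]
    calc (γᵀ)⁻¹ * f = (γᵀ)⁻¹ * (γᵀ * (f * γ⁻¹)) := by rw [key]
    _ = f * γ⁻¹ := by
        rw [← mul_assoc, Matrix.nonsing_inv_mul _ (by simpa using hγinv), one_mul]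
  constructor
  · calc (L * γ⁻¹)ᵀ * η * (L * γ⁻¹)
        = (γ⁻¹)ᵀ * (Lᵀ * η * L) * γ⁻¹ := by
          simp only [transpose_mul, Matrix.mul_assoc]
    _ = (γ⁻¹)ᵀ * f * γ⁻¹ := by rw [hLf]
    _ = f * γ⁻¹ * γ⁻¹ := by rw [h6]
    _ = g := h4.symm
  · have h7 : γ⁻¹ * g⁻¹ = g⁻¹ * (γ⁻¹)ᵀ := by
      calc γ⁻¹ * g⁻¹ = (g * γ)⁻¹ := by rw [Matrix.mul_inv_rev]
      _ = (γᵀ * g)⁻¹ := by rw [h5]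
      _ = g⁻¹ * (γᵀ)⁻¹ := by rw [Matrix.mul_inv_rev]
      _ = g⁻¹ * (γ⁻¹)ᵀ := by rw [Matrix.transpose_nonsing_inv]
    calc ((L * γ⁻¹) * g⁻¹ * Lᵀ)ᵀ
        = L * ((g⁻¹)ᵀ * (γ⁻¹)ᵀ) * Lᵀ := by
          simp only [transpose_mul, transpose_transpose, Matrix.mul_assoc]
    _ = L * (g⁻¹ * (γ⁻¹)ᵀ) * Lᵀ := by rw [Matrix.transpose_nonsing_inv, hg]
    _ = L * (γ⁻¹ * g⁻¹) * Lᵀ := by rw [← h7]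
    _ = (L * γ⁻¹) * g⁻¹ * Lᵀ := by rw [← mul_assoc L γ⁻¹ g⁻¹]
end

section
/- If an invertible real matrix A is a product A = SS' of two symmetric invertible matrices S and S', and F(A) = Σ cₖ Aᵏ is a real polynomial in A which is a square root of A (F(A)² = A), then F(A) = S·T for some symmetric matrix T; in particular A has a real square root of the form S times a symmetric matrix. -/
open Matrix Polynomial

lemma aux_conj_pow {n : ℕ} (A S : Matrix (Fin n) (Fin n) ℝ) (hS : IsUnit S.det) (k : ℕ) :
    (S⁻¹ * A * S) ^ k = S⁻¹ * A ^ k * S := by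
  induction k with
  | zero => simp [Matrix.nonsing_inv_mul _ hS]
  | succ m ih =>
    rw [pow_succ, ih, pow_succ]
    simp only [Matrix.mul_assoc]
    rw [← Matrix.mul_assoc S S⁻¹, Matrix.mul_nonsing_inv _ hS, Matrix.one_mul]

lemma aux_transpose_aeval {n : ℕ} (A : Matrix (Fin n) (Fin n) ℝ) (F : Polynomial ℝ) :
    (aeval A F)ᵀ = aeval Aᵀ F := by
  rw [Polynomial.aeval_eq_sum_range, Polynomial.aeval_eq_sum_range, Matrix.transpose_sum]
  exact Finset.sum_congr rfl fun i _ => by rw [Matrix.transpose_smul, Matrix.transpose_pow]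

lemma aux_conj_aeval {n : ℕ} (A S : Matrix (Fin n) (Fin n) ℝ) (hS : IsUnit S.det)
    (F : Polynomial ℝ) : aeval (S⁻¹ * A * S) F = S⁻¹ * aeval A F * S := by
  rw [Polynomial.aeval_eq_sum_range, Polynomial.aeval_eq_sum_range, Matrix.mul_sum,
    Finset.sum_mul]
  exact Finset.sum_congr rfl fun i _ => by
    rw [aux_conj_pow A S hS, Matrix.mul_smul, Matrix.smul_mul, Matrix.mul_assoc]

theorem stmt_9 (n : ℕ) (A S S' : Matrix (Fin n) (Fin n) ℝ)
    (hA : IsUnit A.det) (hS : Sᵀ = S) (hSinv : IsUnit S.det)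
    (hS' : S'ᵀ = S') (hS'inv : IsUnit S'.det)
    (hprod : A = S * S')
    (F : Polynomial ℝ) (hF : (aeval A F) * (aeval A F) = A) :
    ∃ T : Matrix (Fin n) (Fin n) ℝ, Tᵀ = T ∧ aeval A F = S * T := by
  refine ⟨S⁻¹ * aeval A F, ?_, ?_⟩
  · have hAT : Aᵀ = S⁻¹ * A * S := by
      rw [hprod, transpose_mul, hS, hS']
      simp only [← Matrix.mul_assoc, Matrix.nonsing_inv_mul _ hSinv, Matrix.one_mul]
    rw [transpose_mul, Matrix.transpose_nonsing_inv, hS, aux_transpose_aeval, hAT,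
      aux_conj_aeval _ _ hSinv, Matrix.mul_assoc, Matrix.mul_assoc,
      Matrix.mul_nonsing_inv _ hSinv, Matrix.mul_one]
  · rw [← Matrix.mul_assoc, Matrix.mul_nonsing_inv _ hSinv, Matrix.one_mul]
end

section
/- If an invertible real n×n matrix A has no negative real eigenvalues, then A has a real square root which is a polynomial in A with real coefficients. -/
/-!
By Cayley–Hamilton it suffices to find a real polynomial `p` with `χ_A ∣ p² - X`. Split `χ_A`
into coprime prime powers and glue the solutions by the Chinese remainder theorem. Modulo a prime
power `q ^ i`, a solution modulo `q` lifts by Newton's iteration, because `2` is a unit and `X` is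
a unit modulo `q` (as `det A ≠ 0`). Modulo an irreducible `q`, `X` is the class of a complex root
`z` of `q`, and `z`, not being a negative real, has a square root of the form `a + b z` with
`a, b` real.
-/

open Matrix Polynomial

section SquareRootModulo

variable {R : Type*} [CommRing R] {a d e q x y : R}

theorem dvd_mul_self_sub_of_dvd_sub (hyx : d ∣ y - x) (hx : d ∣ x * x - a) :
    d ∣ y * y - a := by
  rw [show y * y - a = (y - x) * (y + x) + (x * x - a) by ring]
  exact dvd_add (hyx.mul_right _) hx

theorem IsCoprime.exists_mul_self_sub_dvd_mul (hde : IsCoprime d e) (hx : d ∣ x * x - a)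
    (hy : e ∣ y * y - a) : ∃ z, d * e ∣ z * z - a := by
  have ⟨u, v, huv⟩ := hde
  refine ⟨x * v * e + y * u * d, hde.mul_dvd ?_ ?_⟩
  · exact dvd_mul_self_sub_of_dvd_sub ⟨u * (y - x), by linear_combination x * huv⟩ hx
  · exact dvd_mul_self_sub_of_dvd_sub ⟨v * (x - y), by linear_combination y * huv⟩ hy

theorem isCoprime_two_mul_of_dvd_mul_self_sub (h2 : IsUnit (2 : R)) (hqa : IsCoprime q a)
    (hx : q ∣ x * x - a) : IsCoprime q (2 * x) := by
  obtain ⟨c, hc⟩ := hx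
  have hsq : IsCoprime q (x * x) := by
    rw [show x * x = a + q * c by linear_combination hc]
    exact IsCoprime.add_mul_left_right_iff.2 hqa
  exact (isCoprime_mul_unit_left_right h2 q x).2 hsq.of_mul_right_left

theorem exists_mul_self_sub_dvd_pow_succ_succ (h2 : IsUnit (2 : R)) (hqa : IsCoprime q a)
    {k : ℕ} (hx : q ^ (k + 1) ∣ x * x - a) : ∃ y, q ^ (k + 2) ∣ y * y - a := by
  obtain ⟨u, v, huv⟩ := isCoprime_two_mul_of_dvd_mul_self_sub h2 hqa
    ((dvd_pow_self q k.succ_ne_zero).trans hx)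
  obtain ⟨g, hg⟩ := hx
  -- Newton's step `y = x - (x² - a) / (2x)`, where `v` inverts `2x` modulo `q`.
  refine ⟨x - v * g * q ^ (k + 1), g * u + v * v * g * g * q ^ k, ?_⟩
  linear_combination hg - q ^ (k + 1) * g * huv

theorem exists_mul_self_sub_dvd_pow (h2 : IsUnit (2 : R)) (hqa : IsCoprime q a)
    (hx : q ∣ x * x - a) (k : ℕ) : ∃ y, q ^ k ∣ y * y - a := by
  suffices ∀ k : ℕ, ∃ y, q ^ (k + 1) ∣ y * y - a from
    (this k).imp fun _ hy => (pow_dvd_pow q k.le_succ).trans hy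
  intro k
  induction k with
  | zero => exact ⟨x, by rwa [zero_add, pow_one]⟩
  | succ k ih =>
    obtain ⟨y, hy⟩ := ih
    exact exists_mul_self_sub_dvd_pow_succ_succ h2 hqa hy

theorem exists_mul_self_sub_dvd_of_forall_prime_dvd [IsDomain R] [IsPrincipalIdealRing R]
    (h2 : IsUnit (2 : R)) {M : R} (hM : M ≠ 0)
    (hprime : ∀ q, Prime q → q ∣ M → ¬q ∣ a ∧ ∃ x, q ∣ x * x - a) :
    ∃ x, M ∣ x * x - a := by
  induction M using UniqueFactorizationMonoid.induction_on_coprime with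
  | h0 => exact absurd rfl hM
  | h1 hu => exact ⟨0, hu.dvd⟩
  | @hpr q i hq =>
    rcases i.eq_zero_or_pos with rfl | hi
    · exact ⟨0, by rw [pow_zero]; exact one_dvd _⟩
    obtain ⟨hqa, x, hx⟩ := hprime q hq (dvd_pow_self q hi.ne')
    exact exists_mul_self_sub_dvd_pow h2 (hq.coprime_iff_not_dvd.2 hqa) hx i
  | @hcp m n hmn ihm ihn =>
    obtain ⟨x, hx⟩ := ihm (left_ne_zero_of_mul hM)
      fun q hq hqm => hprime q hq (hqm.mul_right n)
    obtain ⟨y, hy⟩ := ihn (right_ne_zero_of_mul hM)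
      fun q hq hqn => hprime q hq (hqn.mul_left m)
    exact hmn.isCoprime.exists_mul_self_sub_dvd_mul hx hy

end SquareRootModulo

theorem Complex.exists_ofReal_add_mul_sq_eq {z : ℂ} (hz : ∀ r : ℝ, r < 0 → z ≠ r) :
    ∃ a b : ℝ, ((a : ℂ) + b * z) ^ 2 = z := by
  by_cases him : z.im = 0
  · have hre : 0 ≤ z.re := not_lt.1 fun h => hz z.re h (Complex.ext rfl (by simpa using him))
    refine ⟨√z.re, 0, ?_⟩
    apply Complex.ext <;> simp [sq, him, Real.mul_self_sqrt hre]
  · obtain ⟨w, hw⟩ := IsAlgClosed.exists_pow_nat_eq z two_pos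
    refine ⟨w.re - w.im / z.im * z.re, w.im / z.im, ?_⟩
    -- As `z` is not real, `1` and `z` span `ℂ` over `ℝ`; these are the coordinates of `w`.
    have hw' : ((w.re - w.im / z.im * z.re : ℝ) : ℂ) + (w.im / z.im : ℝ) * z = w := by
      apply Complex.ext
      · simp
      · simp [him]
    rw [hw', hw]

theorem Polynomial.exists_mul_self_sub_X_dvd_of_irreducible {q : ℝ[X]} (hq : Irreducible q)
    (hneg : ∀ r : ℝ, r < 0 → ¬q.IsRoot r) : ∃ p : ℝ[X], q ∣ p * p - X := by
  obtain ⟨z, hz⟩ := IsAlgClosed.exists_aeval_eq_zero ℂ q (degree_pos_of_irreducible hq).ne'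
  have hz_neg : ∀ r : ℝ, r < 0 → z ≠ r := fun r hr hzr => hneg r hr <| by
    subst hzr
    rw [IsRoot, ← coe_aeval_eq_eval]
    exact (algebraMap ℝ ℂ).injective ((aeval_algebraMap_apply ℂ r q).symm.trans hz)
  obtain ⟨a, b, hab⟩ := Complex.exists_ofReal_add_mul_sq_eq hz_neg
  refine ⟨C a + C b * X, ?_⟩
  rw [minpoly.Irreducible.eq_minpoly hq hz,
    (isUnit_C.2 (leadingCoeff_ne_zero.2 hq.ne_zero).isUnit).mul_left_dvd]
  apply minpoly.dvd
  simp [← sq, hab]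

theorem stmt_10 (n : ℕ) (A : Matrix (Fin n) (Fin n) ℝ) (hA : IsUnit A.det)
    (hneg : ∀ r : ℝ, r < 0 →
      ¬ ((A.map (algebraMap ℝ ℂ)).charpoly.IsRoot (r : ℂ))) :
    ∃ p : Polynomial ℝ, (aeval A p) * (aeval A p) = A := by
  have hcoeff : A.charpoly.coeff 0 ≠ 0 := fun h =>
    hA.ne_zero (by rw [det_eq_sign_charpoly_coeff, h, mul_zero])
  have hnoneg : ∀ r : ℝ, r < 0 → ¬A.charpoly.IsRoot r := fun r hr hroot =>
    hneg r hr (by rw [charpoly_map]; exact hroot.map)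
  obtain ⟨p, c, hc⟩ := exists_mul_self_sub_dvd_of_forall_prime_dvd
    (isUnit_C.2 two_ne_zero.isUnit) A.charpoly_monic.ne_zero fun q hq hqM =>
      ⟨fun hqX => hcoeff (X_dvd_iff.1 ((hq.irreducible.dvd_symm irreducible_X hqX).trans hqM)),
        exists_mul_self_sub_X_dvd_of_irreducible hq.irreducible
          fun r hr hroot => hnoneg r hr (hroot.dvd hqM)⟩
  refine ⟨p, sub_eq_zero.1 ?_⟩
  simpa [aeval_self_charpoly] using congrArg (aeval A) hc
end

section
/- If g and f are invertible symmetric real D×D matrices of Lorentzian signature and g⁻¹f has no negative real eigenvalues, then there exists a real matrix γ with γ² = g⁻¹f and fγ symmetric. -/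
/-!
With `A = g⁻¹ f`, the symmetry of `g` and `f` gives `Aᵀ f = f A`, so `f · p(A)` is symmetric for
every real polynomial `p`. It therefore suffices to find `p ∈ ℝ[X]` with `χ_A ∣ p² - X`, since
then `p(A)² = A` by Cayley–Hamilton. Such a `p` exists for every real polynomial `χ` without roots
in `(-∞, 0]`: by the Chinese remainder theorem it suffices to treat a power of an irreducible `q`;
a complex root `z` of `q` lies in the slit plane, so it has a square root of the form `p(z)` with
`p` real, whence `q ∣ p² - X`, and Hensel's lemma lifts this to `q^m ∣ p'² - X` because `2 p` is
invertible modulo `q`.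
-/

open Matrix Polynomial

theorem IsCoprime.exists_sq_sub_dvd_pow {R : Type*} [CommRing R] {q p a : R}
    (hcop : IsCoprime q (2 * p)) (hdvd : q ∣ p ^ 2 - a) (m : ℕ) :
    ∃ p' : R, q ∣ p' - p ∧ q ^ (m + 1) ∣ p' ^ 2 - a := by
  induction m with
  | zero => exact ⟨p, by simp, by simpa using hdvd⟩
  | succ m ih =>
    obtain ⟨p', ⟨k, hk⟩, s, hs⟩ := ih
    obtain ⟨u, v, huv⟩ : IsCoprime q (2 * p') := by
      have : 2 * p' = 2 * p + q * (2 * k) := by linear_combination 2 * hk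
      exact this ▸ hcop.add_mul_left_right _
    -- Newton step: `v` inverts `2 p'` modulo `q`.
    refine ⟨p' - v * s * q ^ (m + 1), ⟨k - v * s * q ^ m, by linear_combination hk⟩,
      s * u + (v * s) ^ 2 * q ^ m, ?_⟩
    linear_combination hs - q ^ (m + 1) * s * huv

theorem IsCoprime.exists_mul_dvd_sq_sub {R : Type*} [CommRing R] {u v a : R} (h : IsCoprime u v)
    (hu : ∃ p, u ∣ p ^ 2 - a) (hv : ∃ p, v ∣ p ^ 2 - a) : ∃ p, u * v ∣ p ^ 2 - a := by
  obtain ⟨p₁, hp₁⟩ := hu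
  obtain ⟨p₂, hp₂⟩ := hv
  have ⟨x, y, hxy⟩ := h
  let p := p₁ * (y * v) + p₂ * (x * u)
  have congr_sq {d p' : R} (hd : d ∣ p - p') (hp' : d ∣ p' ^ 2 - a) : d ∣ p ^ 2 - a := by
    have e : p ^ 2 - a = (p - p') * (p + p') + (p' ^ 2 - a) := by ring
    exact e ▸ dvd_add (hd.mul_right _) hp'
  refine ⟨p, h.mul_dvd (congr_sq ⟨x * (p₂ - p₁), ?_⟩ hp₁) (congr_sq ⟨y * (p₁ - p₂), ?_⟩ hp₂)⟩
  · linear_combination p₁ * hxy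
  · linear_combination p₂ * hxy

theorem Complex.exists_aeval_sq_eq {z : ℂ} (hz : z ∈ slitPlane) :
    ∃ p : ℝ[X], aeval z p ^ 2 = z := by
  rcases eq_or_ne z.im 0 with him | him
  · have hre : 0 < z.re := by simpa [mem_slitPlane_iff, him] using hz
    refine ⟨C √z.re, ?_⟩
    apply Complex.ext <;> simp [sq, him, Real.mul_self_sqrt hre.le]
  · obtain ⟨w, hw⟩ := IsAlgClosed.exists_pow_nat_eq z two_pos
    -- `(z - re z) / im z = I`
    refine ⟨C w.re + C (w.im / z.im) * (X - C z.re), ?_⟩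
    suffices aeval z (C w.re + C (w.im / z.im) * (X - C z.re)) = w by rw [this, hw]
    apply Complex.ext <;> simp [him]

theorem Irreducible.dvd_of_aeval_eq_zero {K A : Type*} [Field K] [CommRing A] [Nontrivial A]
    [Algebra K A] {q p : K[X]} (hq : Irreducible q) {x : A} (hqx : aeval x q = 0)
    (hpx : aeval x p = 0) : q ∣ p := by
  by_contra h
  obtain ⟨a, b, hab⟩ := hq.coprime_iff_not_dvd.mpr h
  simpa [hqx, hpx] using congrArg (aeval x) hab

theorem Irreducible.exists_isCoprime_two_mul_dvd_sq_sub_X {q : ℝ[X]} (hq : Irreducible q)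
    (hq₀ : ∀ r : ℝ, r ≤ 0 → q.eval r ≠ 0) :
    ∃ p : ℝ[X], IsCoprime q (2 * p) ∧ q ∣ p ^ 2 - X := by
  obtain ⟨z, hz⟩ := Complex.exists_root (f := q.map (algebraMap ℝ ℂ))
    (by rw [degree_map]; exact hq.degree_pos)
  have hqz : aeval z q = 0 := by rwa [aeval_def, eval₂_eq_eval_map]
  have hz : z ∈ Complex.slitPlane := by
    rw [Complex.mem_slitPlane_iff]
    by_contra! h
    have hre : z = (z.re : ℂ) := Complex.ext rfl (by simp [h.2])
    apply hq₀ z.re h.1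
    rw [hre, ← Complex.coe_algebraMap, aeval_algebraMap_apply_eq_algebraMap_eval] at hqz
    simpa using hqz
  obtain ⟨p, hp⟩ := Complex.exists_aeval_sq_eq hz
  refine ⟨p, hq.coprime_iff_not_dvd.mpr fun h ↦ ?_, hq.dvd_of_aeval_eq_zero hqz (by simp [hp])⟩
  have := aeval_eq_zero_of_dvd_aeval_eq_zero h hqz
  simp only [map_mul, map_ofNat, mul_eq_zero, two_ne_zero, false_or] at this
  exact Complex.zero_notMem_slitPlane (by rwa [← hp, this, sq, zero_mul] at hz)

namespace Polynomial

theorem exists_dvd_sq_sub_X {χ : ℝ[X]} (hχ : ∀ r : ℝ, r ≤ 0 → χ.eval r ≠ 0) :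
    ∃ p : ℝ[X], χ ∣ p ^ 2 - X := by
  induction χ using UniqueFactorizationMonoid.induction_on_coprime with
  | h0 => exact absurd eval_zero (hχ 0 le_rfl)
  | h1 hu => exact ⟨0, hu.dvd⟩
  | hpr i hq =>
    cases i with
    | zero => exact ⟨0, by simp⟩
    | succ m =>
      obtain ⟨p, hcop, hdvd⟩ := hq.irreducible.exists_isCoprime_two_mul_dvd_sq_sub_X
        fun r hr h ↦ hχ r hr (by simp [h])
      obtain ⟨p', -, h⟩ := hcop.exists_sq_sub_dvd_pow hdvd m
      exact ⟨p', h⟩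
  | hcp hxy hx hy =>
    exact hxy.isCoprime.exists_mul_dvd_sq_sub (hx fun r hr h ↦ hχ r hr (by simp [h]))
      (hy fun r hr h ↦ hχ r hr (by simp [h]))

end Polynomial

namespace Matrix

variable {n R : Type*} [Fintype n] [DecidableEq n] [CommRing R]

theorem aeval_mul_self_eq_of_charpoly_dvd {A : Matrix n n R} {p : R[X]}
    (h : A.charpoly ∣ p ^ 2 - X) : aeval A p * aeval A p = A := by
  have := aeval_eq_zero_of_dvd_aeval_eq_zero h (aeval_self_charpoly A)
  rwa [map_sub, map_pow, aeval_X, sub_eq_zero, sq] at this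

theorem transpose_mul_aeval_eq {f A : Matrix n n R} (hf : fᵀ = f) (hA : Aᵀ * f = f * A)
    (p : R[X]) : (f * aeval A p)ᵀ = f * aeval A p := by
  induction p using Polynomial.induction_on' with
  | add u v hu hv => rw [map_add, Matrix.mul_add, transpose_add, hu, hv]
  | monomial k c =>
    have hk : (A ^ k)ᵀ * f = f * A ^ k := by
      rw [transpose_pow]; exact (SemiconjBy.pow_right (x := A) hA.symm k).symm
    rw [aeval_monomial, ← Algebra.smul_def, Matrix.mul_smul, transpose_smul, transpose_mul, hf, hk]

end Matrix

theorem stmt_12_general (D : ℕ) (g f : Matrix (Fin D) (Fin D) ℝ)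
    (hg : gᵀ = g) (hginv : IsUnit g.det)
    (hf : fᵀ = f) (hfinv : IsUnit f.det)
    (hneg : ∀ r : ℝ, r < 0 →
      ¬ (((g⁻¹ * f).map (algebraMap ℝ ℂ)).charpoly.IsRoot (r : ℂ))) :
    ∃ γ : Matrix (Fin D) (Fin D) ℝ, γ * γ = g⁻¹ * f ∧ (f * γ)ᵀ = f * γ := by
  set A := g⁻¹ * f
  have hA : Aᵀ * f = f * A := by
    rw [transpose_mul, transpose_nonsing_inv, hg, hf, Matrix.mul_assoc]
  have hdet : A.det ≠ 0 := by
    rw [det_mul, det_nonsing_inv, Ring.inverse_eq_inv']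
    exact mul_ne_zero (inv_ne_zero hginv.ne_zero) hfinv.ne_zero
  have hχ : ∀ r : ℝ, r ≤ 0 → A.charpoly.eval r ≠ 0 := by
    intro r hr hroot
    rcases hr.lt_or_eq with hr | rfl
    · apply hneg r hr
      rw [charpoly_map, IsRoot, ← Complex.coe_algebraMap, eval_map_algebraMap,
        aeval_algebraMap_apply_eq_algebraMap_eval, hroot, map_zero]
    · rw [← coeff_zero_eq_eval_zero] at hroot
      exact hdet (by rw [det_eq_sign_charpoly_coeff, hroot, mul_zero])
  obtain ⟨p, hp⟩ := exists_dvd_sq_sub_X hχ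
  exact ⟨aeval A p, aeval_mul_self_eq_of_charpoly_dvd hp, transpose_mul_aeval_eq hf hA p⟩

theorem stmt_12 (D : ℕ) (η g f : Matrix (Fin D) (Fin D) ℝ)
    (hη : η = Matrix.diagonal (fun i : Fin D => if (i : ℕ) = 0 then (-1 : ℝ) else 1))
    (hg : gᵀ = g) (hginv : IsUnit g.det)
    (hf : fᵀ = f) (hfinv : IsUnit f.det)
    (hgsig : ∃ U : Matrix (Fin D) (Fin D) ℝ, IsUnit U.det ∧ g = Uᵀ * η * U)
    (hfsig : ∃ V : Matrix (Fin D) (Fin D) ℝ, IsUnit V.det ∧ f = Vᵀ * η * V)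
    (hneg : ∀ r : ℝ, r < 0 →
      ¬ (((g⁻¹ * f).map (algebraMap ℝ ℂ)).charpoly.IsRoot (r : ℂ))) :
    ∃ γ : Matrix (Fin D) (Fin D) ℝ, γ * γ = g⁻¹ * f ∧ (f * γ)ᵀ = f * γ :=
  stmt_12_general D g f hg hginv hf hfinv hneg
end

section
/- There is no hyperbolic angle ψ ∈ ℝ and symmetric 2×2 real matrix s such that M = Λ(ψ)·s, where Λ(ψ) = [[cosh ψ, sinh ψ],[sinh ψ, cosh ψ]], whenever the entries of M = [[A,B],[C,D]] satisfy |C - B| > |A - D|. -/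
open Matrix

theorem stmt_13 (A B C D : ℝ) (h : |C - B| > |A - D|) :
    ¬ ∃ (ψ : ℝ) (s : Matrix (Fin 2) (Fin 2) ℝ), sᵀ = s ∧
      !![A, B; C, D] =
        !![Real.cosh ψ, Real.sinh ψ; Real.sinh ψ, Real.cosh ψ] * s := by
  rintro ⟨ψ, s, hs, hM⟩
  have hsym : s 1 0 = s 0 1 := by
    have := congrFun (congrFun hs 0) 1
    simpa [Matrix.transpose_apply] using this
  have hA := congrFun (congrFun hM 0) 0
  have hB := congrFun (congrFun hM 0) 1
  have hC := congrFun (congrFun hM 1) 0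
  have hD := congrFun (congrFun hM 1) 1
  simp [Matrix.mul_apply, Fin.sum_univ_two] at hA hB hC hD
  have hCB : C - B = Real.sinh ψ * (s 0 0 - s 1 1) := by
    rw [hC, hB, hsym]; ring
  have hAD : A - D = Real.cosh ψ * (s 0 0 - s 1 1) := by
    rw [hA, hD, hsym]; ring
  have hle : |C - B| ≤ |A - D| := by
    rw [hCB, hAD, abs_mul, abs_mul]
    have hsc : |Real.sinh ψ| ≤ |Real.cosh ψ| := by
      calc |Real.sinh ψ| = Real.sinh |ψ| := Real.abs_sinh ψ
      _ ≤ Real.cosh |ψ| := (Real.sinh_lt_cosh _).le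
      _ = Real.cosh ψ := Real.cosh_abs ψ
      _ = |Real.cosh ψ| := (abs_of_pos (Real.cosh_pos ψ)).symm
    exact mul_le_mul_of_nonneg_right hsc (abs_nonneg _)
  linarith
end

section
/- In two dimensions: if g and f are invertible symmetric real 2×2 matrices, each of signature (−,+), and g⁻¹f has a real square root, then there exists a real square root γ of g⁻¹f such that fγ is symmetric. -/
open Matrix

private lemma ch2 (A : Matrix (Fin 2) (Fin 2) ℝ) :
    A * A = A.trace • A - A.det • 1 := by
  ext i j
  fin_cases i <;> fin_cases j <;>
    simp [Matrix.mul_apply, Fin.sum_univ_two, Matrix.trace_fin_two, Matrix.det_fin_two,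
      Matrix.one_apply] <;> ring

theorem stmt_16 (g f : Matrix (Fin 2) (Fin 2) ℝ)
    (hg : gᵀ = g) (hginv : IsUnit g.det)
    (hf : fᵀ = f) (hfinv : IsUnit f.det)
    (hgsig : ∃ U : Matrix (Fin 2) (Fin 2) ℝ, IsUnit U.det ∧
      g = Uᵀ * !![(-1 : ℝ), 0; 0, 1] * U)
    (hfsig : ∃ V : Matrix (Fin 2) (Fin 2) ℝ, IsUnit V.det ∧
      f = Vᵀ * !![(-1 : ℝ), 0; 0, 1] * V)
    (hB : ∃ B : Matrix (Fin 2) (Fin 2) ℝ, B * B = g⁻¹ * f) :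
    ∃ γ : Matrix (Fin 2) (Fin 2) ℝ, γ * γ = g⁻¹ * f ∧ (f * γ)ᵀ = f * γ := by
  obtain ⟨B, hBB⟩ := hB
  have hginvT : (g⁻¹)ᵀ = g⁻¹ := by rw [Matrix.transpose_nonsing_inv, hg]
  by_cases ht : B.trace = 0
  · -- scalar case : g⁻¹ * f = c • 1
    set c : ℝ := -B.det with hc
    have hM : g⁻¹ * f = c • 1 := by
      rw [← hBB, ch2 B, ht, hc]; simp
    have hc0 : c ≠ 0 := by
      intro h
      have hdet : (g⁻¹ * f).det ≠ 0 := by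
        rw [Matrix.det_mul, Matrix.det_nonsing_inv, Ring.inverse_eq_inv']
        exact mul_ne_zero (inv_ne_zero (isUnit_iff_ne_zero.mp hginv))
          (isUnit_iff_ne_zero.mp hfinv)
      apply hdet
      rw [hM, h]; simp
    rcases lt_or_gt_of_ne hc0 with hneg | hpos
    · -- c < 0 : use signature of f
      obtain ⟨V, hV, hfV⟩ := hfsig
      set s : ℝ := Real.sqrt (-c) with hs
      have hs2 : s * s = -c := Real.mul_self_sqrt (by linarith)
      set S : Matrix (Fin 2) (Fin 2) ℝ := Vᵀ * !![(0:ℝ), s; s, 0] * V with hS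
      have hST : Sᵀ = S := by
        rw [hS]
        have : (!![(0:ℝ), s; s, 0])ᵀ = !![(0:ℝ), s; s, 0] := by
          ext i j; fin_cases i <;> fin_cases j <;> simp
        rw [Matrix.transpose_mul, Matrix.transpose_mul, Matrix.transpose_transpose, this,
          Matrix.mul_assoc]
      have hff : f * f⁻¹ = 1 := Matrix.mul_nonsing_inv f hfinv
      have hfif : f⁻¹ * f = 1 := Matrix.nonsing_inv_mul f hfinv
      have hVV : V * V⁻¹ = 1 := Matrix.mul_nonsing_inv V hV
      have hVTV : (Vᵀ)⁻¹ * Vᵀ = 1 :=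
        Matrix.nonsing_inv_mul Vᵀ (by rwa [Matrix.det_transpose])
      have hDinv : (!![(-1:ℝ), 0; 0, 1])⁻¹ = !![(-1:ℝ), 0; 0, 1] := by
        apply Matrix.inv_eq_left_inv
        norm_num [Matrix.mul_fin_two, ← Matrix.one_fin_two]
      have hfinvV : f⁻¹ = V⁻¹ * !![(-1:ℝ), 0; 0, 1] * (Vᵀ)⁻¹ := by
        rw [hfV, Matrix.mul_inv_rev, Matrix.mul_inv_rev, hDinv, Matrix.mul_assoc]
      have hmid : !![(0:ℝ), s; s, 0] * !![(-1:ℝ), 0; 0, 1] * !![(0:ℝ), s; s, 0]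
          = c • !![(-1:ℝ), 0; 0, 1] := by
        rw [Matrix.mul_fin_two, Matrix.mul_fin_two]
        ext i j; fin_cases i <;> fin_cases j <;> simp <;> nlinarith [hs2]
      have hSfS : S * f⁻¹ * S = c • f := by
        rw [hS, hfinvV, hfV]
        calc Vᵀ * !![(0:ℝ), s; s, 0] * V * (V⁻¹ * !![(-1:ℝ), 0; 0, 1] * (Vᵀ)⁻¹) *
              (Vᵀ * !![(0:ℝ), s; s, 0] * V)
            = Vᵀ * !![(0:ℝ), s; s, 0] * (V * V⁻¹) * !![(-1:ℝ), 0; 0, 1] *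
              ((Vᵀ)⁻¹ * Vᵀ) * !![(0:ℝ), s; s, 0] * V := by
              simp only [Matrix.mul_assoc]
          _ = Vᵀ * (!![(0:ℝ), s; s, 0] * !![(-1:ℝ), 0; 0, 1] * !![(0:ℝ), s; s, 0]) * V := by
              rw [hVV, hVTV]; simp only [Matrix.mul_one, Matrix.mul_assoc]
          _ = c • (Vᵀ * !![(-1:ℝ), 0; 0, 1] * V) := by
              rw [hmid]; simp only [Matrix.mul_smul, Matrix.smul_mul, Matrix.mul_assoc]
      refine ⟨f⁻¹ * S, ?_, ?_⟩
      · calc f⁻¹ * S * (f⁻¹ * S) = f⁻¹ * (S * f⁻¹ * S) := by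
              simp only [Matrix.mul_assoc]
          _ = f⁻¹ * (c • f) := by rw [hSfS]
          _ = c • (f⁻¹ * f) := by rw [Matrix.mul_smul]
          _ = g⁻¹ * f := by rw [hfif, hM]
      · rw [← Matrix.mul_assoc, hff, Matrix.one_mul, hST]
    · -- c > 0
      refine ⟨Real.sqrt c • 1, ?_, ?_⟩
      · rw [hM, smul_mul_smul_comm, Matrix.one_mul, Real.mul_self_sqrt hpos.le]
      · simp [Matrix.transpose_smul, hf]
  · -- trace nonzero : γ = B
    refine ⟨B, hBB, ?_⟩
    have key : B.trace • (f * B) = f * g⁻¹ * f + B.det • f := by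
      have h1 : B.trace • B = g⁻¹ * f + B.det • 1 := by
        have := ch2 B; rw [hBB] at this
        rw [eq_sub_iff_add_eq] at this
        exact this.symm
      calc B.trace • (f * B) = f * (B.trace • B) := by rw [Matrix.mul_smul]
        _ = f * (g⁻¹ * f) + B.det • f := by
            rw [h1, Matrix.mul_add, Matrix.mul_smul, Matrix.mul_one]
        _ = f * g⁻¹ * f + B.det • f := by rw [Matrix.mul_assoc]
    have hsymm : (f * g⁻¹ * f + B.det • f)ᵀ = f * g⁻¹ * f + B.det • f := by
      simp [Matrix.transpose_add, Matrix.transpose_mul, Matrix.transpose_smul,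
        hf, hginvT, Matrix.mul_assoc]
    have : (B.trace • (f * B))ᵀ = B.trace • (f * B) := by rw [key, hsymm]
    rw [Matrix.transpose_smul] at this
    exact smul_right_injective _ ht this
end

section
/- A 3×3 real invertible matrix A of the form A = P⁻¹·diag(−u,−u,v)·P with u, v > 0 and P real invertible, which can be written as A = SS' with S, S' symmetric real matrices both of signature (−,+,+), admits a real square root γ with S⁻¹γ symmetric. -/
/-!
Conjugating by `P` reduces everything to `D = diag(-u, -u, v) = M W` with `M = P S Pᵀ`
and `W = P⁻ᵀ S' P⁻¹`, again symmetric of signature `(-,+,+)`. Since `D = Dᵀ = W M`, the matrix `M`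
commutes with `D`, so it is block diagonal with a symmetric `2 × 2` block `N` and a scalar `m`.
The block `N` is indefinite: otherwise `det M < 0` forces `m < 0`, and the quadratic forms of `M`
and of `W` (which at `M y` is `yᵀ D M y`) restrict on the first two coordinates to `q_N` and
`-u q_N`, so one of them would be nowhere positive. For indefinite `N` there is a symmetric `Y`
with `tr (N Y) = 0` and `det (N Y) = u`, hence `(N Y)² = -u` by Cayley–Hamilton, and
`γ = M · diag(Y, √v / m)` is a square root of `D` with `M⁻¹ γ` symmetric.
-/

open Matrix

namespace Matrix

theorem dotProduct_mulVec_transpose_mul_mul {n R : Type*} [Fintype n] [CommRing R]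
    (B C : Matrix n n R) (x : n → R) :
    x ⬝ᵥ ((Cᵀ * B * C) *ᵥ x) = (C *ᵥ x) ⬝ᵥ (B *ᵥ (C *ᵥ x)) := by
  rw [← mulVec_mulVec, ← mulVec_mulVec, dotProduct_mulVec x Cᵀ, vecMul_transpose]

variable {n R : Type*} [Fintype n] [DecidableEq n]

def Congruent [CommRing R] (S D : Matrix n n R) : Prop :=
  ∃ U : Matrix n n R, IsUnit U.det ∧ S = Uᵀ * D * U

theorem Congruent.transpose_mul_mul [CommRing R] {S D : Matrix n n R} (h : S.Congruent D)
    {C : Matrix n n R} (hC : IsUnit C.det) : (Cᵀ * S * C).Congruent D := by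
  obtain ⟨U, hU, rfl⟩ := h
  refine ⟨U * C, by simpa [det_mul] using hU.mul hC, ?_⟩
  simp only [transpose_mul, Matrix.mul_assoc]

theorem Congruent.exists_dotProduct_mulVec_pos [Field R] [LinearOrder R] [IsStrictOrderedRing R]
    {S : Matrix n n R} {d : n → R} (h : S.Congruent (diagonal d)) {i : n} (hi : 0 < d i) :
    ∃ x, 0 < x ⬝ᵥ (S *ᵥ x) := by
  obtain ⟨U, hU, rfl⟩ := h
  refine ⟨U⁻¹ *ᵥ Pi.single i 1, ?_⟩
  rw [dotProduct_mulVec_transpose_mul_mul, mulVec_mulVec, mul_nonsing_inv U hU, one_mulVec]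
  simpa [mulVec_single] using hi

theorem Congruent.det_neg [CommRing R] [LinearOrder R] [IsStrictOrderedRing R]
    {S : Matrix n n R} {d : n → R} (h : S.Congruent (diagonal d)) (hd : ∏ i, d i < 0) :
    S.det < 0 := by
  obtain ⟨U, hU, rfl⟩ := h
  rw [det_mul, det_mul, det_transpose, det_diagonal, mul_right_comm, ← sq]
  exact mul_neg_of_pos_of_neg (sq_pos_of_ne_zero hU.ne_zero) hd

theorem apply_eq_zero_of_mul_diagonal_eq [CommRing R] [NoZeroDivisors R] {M : Matrix n n R}
    {d : n → R} (h : M * diagonal d = diagonal d * M) {i j : n} (hij : d i ≠ d j) :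
    M i j = 0 := by
  have hij' : (d j - d i) * M i j = 0 := by
    have hentry := congrFun (congrFun h i) j
    rw [mul_diagonal, diagonal_mul] at hentry
    linear_combination hentry
  exact (mul_eq_zero.mp hij').resolve_left (sub_ne_zero.mpr hij.symm)

theorem exists_sqrt_of_conj [Field R] {A D S P : Matrix n n R} (hP : IsUnit P.det)
    (hA : A = P⁻¹ * D * P)
    (h : ∃ γ, γ * γ = D ∧ ((P * S * Pᵀ)⁻¹ * γ)ᵀ = (P * S * Pᵀ)⁻¹ * γ) :
    ∃ γ, γ * γ = A ∧ (S⁻¹ * γ)ᵀ = S⁻¹ * γ := by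
  obtain ⟨γ, hsq, hsymm⟩ := h
  have hPT : IsUnit Pᵀ.det := by rwa [det_transpose]
  refine ⟨P⁻¹ * γ * P, ?_, ?_⟩
  · simp only [hA, ← hsq, Matrix.mul_assoc, mul_nonsing_inv_cancel_left _ _ hP]
  · have hconj : S⁻¹ * (P⁻¹ * γ * P) = Pᵀ * ((P * S * Pᵀ)⁻¹ * γ) * P := by
      rw [mul_inv_rev, mul_inv_rev]
      simp only [Matrix.mul_assoc, mul_nonsing_inv_cancel_left _ _ hPT]
    rw [hconj, transpose_mul, transpose_mul, hsymm, transpose_transpose, Matrix.mul_assoc Pᵀ]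

end Matrix

theorem binaryForm_det_nonpos_of_pos_of_neg {a b c x y x' y' : ℝ}
    (hpos : 0 < a * x ^ 2 + 2 * b * x * y + c * y ^ 2)
    (hneg : a * x' ^ 2 + 2 * b * x' * y' + c * y' ^ 2 < 0) : a * c - b ^ 2 ≤ 0 := by
  by_contra! hdet
  have key : ∀ p q : ℝ, 0 ≤ a * (a * p ^ 2 + 2 * b * p * q + c * q ^ 2) := fun p q => by
    nlinarith [sq_nonneg (a * p + b * q), mul_nonneg hdet.le (sq_nonneg q)]
  have ha : a = 0 := le_antisymm (nonpos_of_mul_nonneg_left (key x' y') hneg)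
    (nonneg_of_mul_nonneg_left (key x y) hpos)
  rw [ha] at hdet
  nlinarith [sq_nonneg b]

-- For `N = !![a, b; b, c]` and `Y = !![y₁, y₂; y₂, y₃]`: `tr (N Y) = 0` and `det N * det Y = 1`.
theorem exists_traceless_det_eq_inv {a b c : ℝ} (h : a * c - b ^ 2 < 0) :
    ∃ y₁ y₂ y₃ : ℝ, a * y₁ + 2 * b * y₂ + c * y₃ = 0 ∧
      (a * c - b ^ 2) * (y₁ * y₃ - y₂ ^ 2) = 1 := by
  set s := √(b ^ 2 - a * c)
  have hs : s ^ 2 = b ^ 2 - a * c := Real.sq_sqrt (by linarith)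
  have hs0 : s ≠ 0 := (Real.sqrt_pos.mpr (by linarith)).ne'
  by_cases ha : a = 0
  · by_cases hc : c = 0
    · subst ha hc
      have hb : b ≠ 0 := by rintro rfl; simp at h
      exact ⟨1, 0, -1 / b ^ 2, by ring, by field_simp; ring⟩
    · exact ⟨0, 1 / s, -2 * b / (s * c), by field_simp; ring,
        by field_simp; linear_combination (-c) * hs⟩
  · exact ⟨-2 * b / (s * a), 1 / s, 0, by field_simp; ring,
      by field_simp; linear_combination (-a) * hs⟩

-- `diag(N, m)` with `N = !![a, b; b, c]`.
def symmBlock (a b c m : ℝ) : Matrix (Fin 3) (Fin 3) ℝ :=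
  !![a, b, 0; b, c, 0; 0, 0, m]

theorem symmBlock_transpose (a b c m : ℝ) : (symmBlock a b c m)ᵀ = symmBlock a b c m := by
  ext i j
  fin_cases i <;> fin_cases j <;> rfl

theorem det_symmBlock (a b c m : ℝ) : (symmBlock a b c m).det = (a * c - b ^ 2) * m := by
  simp only [symmBlock, det_fin_three, of_apply, cons_val', cons_val_zero, cons_val_one, cons_val,
    cons_val_fin_one]
  ring

theorem exists_eq_symmBlock_of_commute_diagonal {M : Matrix (Fin 3) (Fin 3) ℝ}
    (hM : Mᵀ = M) {d : Fin 3 → ℝ} (hd01 : d 0 = d 1) (hd02 : d 0 ≠ d 2)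
    (h : M * diagonal d = diagonal d * M) :
    ∃ a b c m : ℝ, M = symmBlock a b c m := by
  have hd12 : d 1 ≠ d 2 := hd01 ▸ hd02
  have hsymm : M 1 0 = M 0 1 := by rw [← transpose_apply M 0 1, hM]
  refine ⟨M 0 0, M 0 1, M 1 1, M 2 2, ?_⟩
  ext i j
  fin_cases i <;> fin_cases j <;>
    simp [symmBlock, hsymm, apply_eq_zero_of_mul_diagonal_eq h, hd02, hd12, hd02.symm, hd12.symm]

theorem exists_symm_sq_symmBlock_mul_eq_diagonal {a b c m u v : ℝ} (hN : a * c - b ^ 2 < 0)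
    (hm : m ≠ 0) (hu : 0 ≤ u) (hv : 0 ≤ v) :
    ∃ Z : Matrix (Fin 3) (Fin 3) ℝ, Zᵀ = Z ∧
      (symmBlock a b c m * Z) * (symmBlock a b c m * Z) = diagonal ![-u, -u, v] := by
  obtain ⟨y₁, y₂, y₃, htr, hdet⟩ := exists_traceless_det_eq_inv hN
  have hu' : √u * √u = u := Real.mul_self_sqrt hu
  have hv' : √v * √v = v := Real.mul_self_sqrt hv
  refine ⟨symmBlock (√u * y₁) (√u * y₂) (√u * y₃) (√v / m), symmBlock_transpose .., ?_⟩
  ext i j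
  fin_cases i <;> fin_cases j <;> simp [symmBlock, mul_apply, Fin.sum_univ_three]
  · linear_combination (√u * √u * (a * y₁ + b * y₂)) * htr - (√u * √u) * hdet - hu'
  · linear_combination (√u * √u * (a * y₂ + b * y₃)) * htr
  · linear_combination (√u * √u * (b * y₁ + c * y₂)) * htr
  · linear_combination (√u * √u * (b * y₂ + c * y₃)) * htr - (√u * √u) * hdet - hu'
  · field_simp
    linear_combination hv'

theorem symmBlock_minor_neg_of_congruent {a b c m u v : ℝ} (hu : 0 < u) (hv : 0 < v)
    {W : Matrix (Fin 3) (Fin 3) ℝ} (hMW : symmBlock a b c m * W = diagonal ![-u, -u, v])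
    (hMsig : (symmBlock a b c m).Congruent (diagonal ![-1, 1, 1]))
    (hWsig : W.Congruent (diagonal ![-1, 1, 1])) :
    a * c - b ^ 2 < 0 := by
  set M := symmBlock a b c m
  have hdet : (a * c - b ^ 2) * m < 0 :=
    det_symmBlock a b c m ▸ hMsig.det_neg (by simp [Fin.prod_univ_three])
  have hMunit : IsUnit M.det := isUnit_iff_ne_zero.mpr (det_symmBlock a b c m ▸ hdet.ne)
  obtain ⟨x, hx⟩ := hMsig.exists_dotProduct_mulVec_pos (i := 1) (by simp)
  obtain ⟨x', hx'⟩ := hWsig.exists_dotProduct_mulVec_pos (i := 1) (by simp)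
  set y := M⁻¹ *ᵥ x'
  have hWM : x' ⬝ᵥ (W *ᵥ x') = y ⬝ᵥ ((diagonal ![-u, -u, v] * M) *ᵥ y) := by
    have hMWM : M * W * M = Mᵀ * W * M := by rw [symmBlock_transpose]
    rw [← hMW, hMWM, dotProduct_mulVec_transpose_mul_mul, mulVec_mulVec,
      mul_nonsing_inv _ hMunit, one_mulVec]
  have hqx : 0 < (a * x 0 ^ 2 + 2 * b * x 0 * x 1 + c * x 1 ^ 2) + m * x 2 ^ 2 :=
    hx.trans_eq (by
      simp only [M, symmBlock, dotProduct, mulVec, Fin.sum_univ_three, of_apply, cons_val',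
        cons_val_zero, cons_val_one, cons_val, cons_val_fin_one]
      ring)
  have hqy : 0 < -u * (a * y 0 ^ 2 + 2 * b * y 0 * y 1 + c * y 1 ^ 2) + v * m * y 2 ^ 2 :=
    (hWM ▸ hx').trans_eq (by
      simp only [M, symmBlock, dotProduct, mulVec, diagonal_mul, Fin.sum_univ_three, of_apply,
        cons_val', cons_val_zero, cons_val_one, cons_val, cons_val_fin_one]
      ring)
  by_contra! hN
  have hm : m < 0 := neg_of_mul_neg_right hdet hN
  have hx2 : m * x 2 ^ 2 ≤ 0 := mul_nonpos_of_nonpos_of_nonneg hm.le (sq_nonneg _)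
  have hy2 : v * (m * y 2 ^ 2) ≤ 0 :=
    mul_nonpos_of_nonneg_of_nonpos hv.le (mul_nonpos_of_nonpos_of_nonneg hm.le (sq_nonneg _))
  have hN' := binaryForm_det_nonpos_of_pos_of_neg (a := a) (b := b) (c := c)
    (x := x 0) (y := x 1) (x' := y 0) (y' := y 1) (by linarith) (by nlinarith)
  nlinarith

theorem exists_sqrt_diagonal_of_congruent {u v : ℝ} (hu : 0 < u) (hv : 0 < v)
    {M W : Matrix (Fin 3) (Fin 3) ℝ} (hM : Mᵀ = M) (hW : Wᵀ = W)
    (hMW : M * W = diagonal ![-u, -u, v])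
    (hMsig : M.Congruent (diagonal ![-1, 1, 1])) (hWsig : W.Congruent (diagonal ![-1, 1, 1])) :
    ∃ γ, γ * γ = diagonal ![-u, -u, v] ∧ (M⁻¹ * γ)ᵀ = M⁻¹ * γ := by
  have hWM : W * M = diagonal ![-u, -u, v] := by
    rw [← hM, ← hW, ← transpose_mul, hMW, diagonal_transpose]
  have hcomm : M * diagonal ![-u, -u, v] = diagonal ![-u, -u, v] * M := by
    rw [← hWM, ← Matrix.mul_assoc, hMW, hWM]
  obtain ⟨a, b, c, m, rfl⟩ :=
    exists_eq_symmBlock_of_commute_diagonal hM rfl (show -u ≠ v from (by linarith : -u < v).ne)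
      hcomm
  have hdet : (a * c - b ^ 2) * m ≠ 0 :=
    (det_symmBlock a b c m ▸ hMsig.det_neg (by simp [Fin.prod_univ_three])).ne
  obtain ⟨Z, hZ, hsq⟩ := exists_symm_sq_symmBlock_mul_eq_diagonal
    (symmBlock_minor_neg_of_congruent hu hv hMW hMsig hWsig) (right_ne_zero_of_mul hdet)
    hu.le hv.le
  refine ⟨symmBlock a b c m * Z, hsq, ?_⟩
  rw [nonsing_inv_mul_cancel_left _ _ (isUnit_iff_ne_zero.mpr (det_symmBlock a b c m ▸ hdet)),
    hZ]

theorem stmt_17_general (u v : ℝ) (hu : 0 < u) (hv : 0 < v)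
    (P A S S' : Matrix (Fin 3) (Fin 3) ℝ) (hP : IsUnit P.det)
    (hA : A = P⁻¹ * Matrix.diagonal ![-u, -u, v] * P)
    (hS : Sᵀ = S)
    (hS' : S'ᵀ = S')
    (hSsig : ∃ U : Matrix (Fin 3) (Fin 3) ℝ, IsUnit U.det ∧
      S = Uᵀ * Matrix.diagonal ![(-1 : ℝ), 1, 1] * U)
    (hS'sig : ∃ V : Matrix (Fin 3) (Fin 3) ℝ, IsUnit V.det ∧
      S' = Vᵀ * Matrix.diagonal ![(-1 : ℝ), 1, 1] * V)
    (hprod : A = S * S') :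
    ∃ γ : Matrix (Fin 3) (Fin 3) ℝ, γ * γ = A ∧ (S⁻¹ * γ)ᵀ = S⁻¹ * γ := by
  have hPT : IsUnit Pᵀ.det := by rwa [det_transpose]
  have hPTinv : Pᵀ * P⁻¹ᵀ = 1 := by rw [← transpose_mul, nonsing_inv_mul P hP, transpose_one]
  have hMsig : (P * S * Pᵀ).Congruent (diagonal ![-1, 1, 1]) := by
    simpa using Congruent.transpose_mul_mul hSsig hPT
  have hWsig : (P⁻¹ᵀ * S' * P⁻¹).Congruent (diagonal ![-1, 1, 1]) :=
    Congruent.transpose_mul_mul hS'sig (isUnit_nonsing_inv_det P hP)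
  have hMW : P * S * Pᵀ * (P⁻¹ᵀ * S' * P⁻¹) = diagonal ![-u, -u, v] :=
    calc P * S * Pᵀ * (P⁻¹ᵀ * S' * P⁻¹) = P * A * P⁻¹ := by
          simp only [hprod, Matrix.mul_assoc, ← Matrix.mul_assoc Pᵀ, hPTinv, Matrix.one_mul]
      _ = diagonal ![-u, -u, v] := by
          simp only [hA, Matrix.mul_assoc, mul_nonsing_inv_cancel_left _ _ hP,
            mul_nonsing_inv _ hP, Matrix.mul_one]
  refine exists_sqrt_of_conj hP hA (exists_sqrt_diagonal_of_congruent hu hv ?_ ?_ hMW hMsig hWsig)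
  · rw [transpose_mul, transpose_mul, transpose_transpose, hS, Matrix.mul_assoc]
  · rw [transpose_mul, transpose_mul, transpose_transpose, hS', Matrix.mul_assoc]

theorem stmt_17 (u v : ℝ) (hu : 0 < u) (hv : 0 < v)
    (P A S S' : Matrix (Fin 3) (Fin 3) ℝ) (hP : IsUnit P.det)
    (hA : A = P⁻¹ * Matrix.diagonal ![-u, -u, v] * P)
    (hAinv : IsUnit A.det)
    (hS : Sᵀ = S) (hSinv : IsUnit S.det)
    (hS' : S'ᵀ = S') (hS'inv : IsUnit S'.det)
    (hSsig : ∃ U : Matrix (Fin 3) (Fin 3) ℝ, IsUnit U.det ∧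
      S = Uᵀ * Matrix.diagonal ![(-1 : ℝ), 1, 1] * U)
    (hS'sig : ∃ V : Matrix (Fin 3) (Fin 3) ℝ, IsUnit V.det ∧
      S' = Vᵀ * Matrix.diagonal ![(-1 : ℝ), 1, 1] * V)
    (hprod : A = S * S') :
    ∃ γ : Matrix (Fin 3) (Fin 3) ℝ, γ * γ = A ∧ (S⁻¹ * γ)ᵀ = S⁻¹ * γ :=
  stmt_17_general u v hu hv P A S S' hP hA hS hS' hSsig hS'sig hprod
end

section
/- No invertible real 4×4 matrix A that is the product A = SS' of two symmetric matrices S and S' each of Lorentzian signature (−,+,+,+) can be similar to diag(−u,−u,−v,−v) with u, v > 0. -/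
open Matrix

private lemma quad_g4 (z : Fin 4 → ℝ) :
    z ⬝ᵥ (Matrix.diagonal ![(-1:ℝ),1,1,1]) *ᵥ z = -(z 0)^2 + (z 1)^2 + (z 2)^2 + (z 3)^2 := by
  simp [dotProduct, Matrix.mulVec_diagonal, Fin.sum_univ_four]
  ring

private lemma congr_quad (W G : Matrix (Fin 4) (Fin 4) ℝ) (x y : Fin 4 → ℝ) :
    x ⬝ᵥ (Wᵀ * G * W) *ᵥ y = (W *ᵥ x) ⬝ᵥ G *ᵥ (W *ᵥ y) := by
  rw [← Matrix.mulVec_mulVec, ← Matrix.mulVec_mulVec, Matrix.dotProduct_mulVec, Matrix.vecMul_transpose]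

private lemma key (M W : Matrix (Fin 4) (Fin 4) ℝ) (hW : IsUnit W.det)
    (hM : M = Wᵀ * (Matrix.diagonal ![(-1:ℝ),1,1,1]) * W) (x y : Fin 4 → ℝ)
    (hind : ∀ a b : ℝ, a • x + b • y = 0 → a = 0 ∧ b = 0)
    (hneg : ∀ a b : ℝ, (a • x + b • y) ⬝ᵥ M *ᵥ (a • x + b • y) ≤ 0) : False := by
  set x' := W *ᵥ x with hx'
  set y' := W *ᵥ y with hy'
  have hcombo : ∀ a b : ℝ, W *ᵥ (a • x + b • y) = a • x' + b • y' := by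
    intro a b
    simp [Matrix.mulVec_add, Matrix.mulVec_smul, hx', hy']
  have hq : ∀ a b : ℝ, -((a • x' + b • y') 0)^2 + ((a • x' + b • y') 1)^2
      + ((a • x' + b • y') 2)^2 + ((a • x' + b • y') 3)^2 ≤ 0 := by
    intro a b
    have h := hneg a b
    rw [hM, congr_quad, hcombo, quad_g4] at h
    exact h
  have hzero : ∀ a b : ℝ, (a • x' + b • y') 0 = 0 → a = 0 ∧ b = 0 := by
    intro a b h0
    have h := hq a b
    rw [h0] at h
    set z := a • x' + b • y' with hz
    have h1 : z 1 = 0 := by nlinarith [sq_nonneg (z 1), sq_nonneg (z 2), sq_nonneg (z 3)]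
    have h2 : z 2 = 0 := by nlinarith [sq_nonneg (z 1), sq_nonneg (z 2), sq_nonneg (z 3)]
    have h3 : z 3 = 0 := by nlinarith [sq_nonneg (z 1), sq_nonneg (z 2), sq_nonneg (z 3)]
    have hz0 : z = 0 := by
      funext i
      fin_cases i
      · exact h0
      · exact h1
      · exact h2
      · exact h3
    have h4 : W *ᵥ (a • x + b • y) = 0 := by rw [hcombo]; exact hz0
    have h5 : a • x + b • y = 0 := by
      have h6 := congrArg (fun w => W⁻¹ *ᵥ w) h4
      simpa [Matrix.mulVec_mulVec, Matrix.nonsing_inv_mul W hW] using h6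
    exact hind a b h5
  by_cases hx0 : x' 0 = 0
  · have := hzero 1 0 (by simp [hx0])
    exact one_ne_zero this.1
  · have := hzero (y' 0) (-(x' 0)) (by simp; ring)
    exact hx0 (neg_eq_zero.mp this.2)

theorem stmt_18 (u v : ℝ) (hu : 0 < u) (hv : 0 < v)
    (S S' P : Matrix (Fin 4) (Fin 4) ℝ)
    (hS : Sᵀ = S) (hSinv : IsUnit S.det)
    (hS' : S'ᵀ = S') (hS'inv : IsUnit S'.det)
    (hSsig : ∃ U : Matrix (Fin 4) (Fin 4) ℝ, IsUnit U.det ∧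
      S = Uᵀ * Matrix.diagonal ![(-1 : ℝ), 1, 1, 1] * U)
    (hS'sig : ∃ V : Matrix (Fin 4) (Fin 4) ℝ, IsUnit V.det ∧
      S' = Vᵀ * Matrix.diagonal ![(-1 : ℝ), 1, 1, 1] * V)
    (hP : IsUnit P.det) :
    S * S' ≠ P⁻¹ * Matrix.diagonal ![-u, -u, -v, -v] * P := by
  intro heq
  obtain ⟨U, hU, hSU⟩ := hSsig
  obtain ⟨V, hV, hSV⟩ := hS'sig
  set g : Matrix (Fin 4) (Fin 4) ℝ := Matrix.diagonal ![(-1 : ℝ), 1, 1, 1] with hg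
  set D : Matrix (Fin 4) (Fin 4) ℝ := Matrix.diagonal ![-u, -u, -v, -v] with hD
  have hPi : P⁻¹ * P = 1 := Matrix.nonsing_inv_mul P hP
  have hPi' : P * P⁻¹ = 1 := Matrix.mul_nonsing_inv P hP
  have hdetPinv : IsUnit (P⁻¹).det := Matrix.isUnit_nonsing_inv_det P hP
  set S'' : Matrix (Fin 4) (Fin 4) ℝ := (P⁻¹)ᵀ * S' * P⁻¹ with hS''
  set N' : Matrix (Fin 4) (Fin 4) ℝ := (P⁻¹)ᵀ * (S' * S * S') * P⁻¹ with hN'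
  have hW1 : S'' = (V * P⁻¹)ᵀ * g * (V * P⁻¹) := by
    rw [hS'', hSV]
    simp [Matrix.transpose_mul, Matrix.mul_assoc]
  have hdetW1 : IsUnit (V * P⁻¹).det := by
    rw [Matrix.det_mul]; exact hV.mul hdetPinv
  have hW2 : N' = (U * S' * P⁻¹)ᵀ * g * (U * S' * P⁻¹) := by
    rw [hN', hSU]
    simp only [Matrix.transpose_mul, hS']
    simp [Matrix.mul_assoc]
  have hdetW2 : IsUnit (U * S' * P⁻¹).det := by
    rw [Matrix.det_mul, Matrix.det_mul]; exact (hU.mul hS'inv).mul hdetPinv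
  have hN'D : N' = S'' * D := by
    rw [hN', hS'']
    calc (P⁻¹)ᵀ * (S' * S * S') * P⁻¹ = (P⁻¹)ᵀ * S' * (S * S') * P⁻¹ := by
          simp [Matrix.mul_assoc]
      _ = (P⁻¹)ᵀ * S' * (P⁻¹ * D * P) * P⁻¹ := by rw [heq]
      _ = (P⁻¹)ᵀ * S' * P⁻¹ * D * (P * P⁻¹) := by simp [Matrix.mul_assoc]
      _ = (P⁻¹)ᵀ * S' * P⁻¹ * D := by rw [hPi', Matrix.mul_one]
  have hN'sym : N'ᵀ = N' := by
    rw [hN']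
    simp only [Matrix.transpose_mul, Matrix.transpose_transpose, hS', hS]
    simp [Matrix.mul_assoc]
  have hS''sym : S''ᵀ = S'' := by
    rw [hS'']
    simp [Matrix.transpose_mul, hS', Matrix.mul_assoc]
  have hDsym : Dᵀ = D := Matrix.diagonal_transpose _
  have hcomm : S'' * D = D * S'' := by
    conv_rhs => rw [← hDsym, ← hS''sym, ← Matrix.transpose_mul, ← hN'D, hN'sym, hN'D]
  -- quadratic form of N' on eigen-like vectors of D
  have hqN' : ∀ (c : ℝ) (w : Fin 4 → ℝ), D *ᵥ w = (-c) • w →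
      w ⬝ᵥ N' *ᵥ w = -c * (w ⬝ᵥ S'' *ᵥ w) := by
    intro c w hw
    rw [hN'D, ← Matrix.mulVec_mulVec, hw, Matrix.mulVec_smul, dotProduct_smul,
      smul_eq_mul]
  have hDu : ∀ w : Fin 4 → ℝ, w 2 = 0 → w 3 = 0 → D *ᵥ w = (-u) • w := by
    intro w h2 h3
    funext i
    fin_cases i <;> simp [hD, Matrix.mulVec_diagonal, h2, h3]
  have hDv : ∀ w : Fin 4 → ℝ, w 0 = 0 → w 1 = 0 → D *ᵥ w = (-v) • w := by
    intro w h0 h1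
    funext i
    fin_cases i <;> simp [hD, Matrix.mulVec_diagonal, h0, h1]
  rcases eq_or_ne u v with rfl | huv
  -- case u = v : S * S' = -u • 1
  · set W1 := V * P⁻¹ with hW1def
    set s := W1⁻¹ *ᵥ ![(0:ℝ),1,0,0] with hs
    set t := W1⁻¹ *ᵥ ![(0:ℝ),0,1,0] with ht
    have hWinv : W1 * W1⁻¹ = 1 := Matrix.mul_nonsing_inv _ hdetW1
    have hWs : W1 *ᵥ s = ![(0:ℝ),1,0,0] := by
      rw [hs, Matrix.mulVec_mulVec, hWinv, Matrix.one_mulVec]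
    have hWt : W1 *ᵥ t = ![(0:ℝ),0,1,0] := by
      rw [ht, Matrix.mulVec_mulVec, hWinv, Matrix.one_mulVec]
    have hDall : ∀ w : Fin 4 → ℝ, D *ᵥ w = (-u) • w := by
      intro w
      funext i
      fin_cases i <;> simp [hD, Matrix.mulVec_diagonal]
    have hqS : ∀ a b : ℝ, (a • s + b • t) ⬝ᵥ S'' *ᵥ (a • s + b • t) = a^2 + b^2 := by
      intro a b
      rw [hW1, congr_quad]
      have hc : W1 *ᵥ (a • s + b • t) = a • ![(0:ℝ),1,0,0] + b • ![(0:ℝ),0,1,0] := by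
        simp [Matrix.mulVec_add, Matrix.mulVec_smul, hWs, hWt]
      rw [hc, quad_g4]
      simp
    apply key N' (U * S' * P⁻¹) hdetW2 hW2 s t
    · intro a b hab
      have h := congrArg (fun w => W1 *ᵥ w) hab
      simp only [Matrix.mulVec_add, Matrix.mulVec_smul, hWs, hWt, Matrix.mulVec_zero] at h
      constructor
      · have := congrFun h 1
        simpa using this
      · have := congrFun h 2
        simpa using this
    · intro a b
      rw [hqN' u _ (hDall _), hqS]
      nlinarith [sq_nonneg a, sq_nonneg b]
  -- case u ≠ v : S'' is block diagonal
  · have hentry : ∀ i j : Fin 4, S'' i j * (![-u,-u,-v,-v] j) = (![-u,-u,-v,-v] i) * S'' i j := by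
      intro i j
      have h := congrFun (congrFun hcomm i) j
      rw [hD] at h
      simpa [Matrix.mul_diagonal, Matrix.diagonal_mul] using h
    have cancel : ∀ r : ℝ, r * (-v) = (-u) * r → r = 0 := by
      intro r hr
      have h2 : r * (u - v) = 0 := by linear_combination hr
      rcases mul_eq_zero.mp h2 with h | h
      · exact h
      · exact absurd (by linarith : u = v) huv
    have h02 : S'' 0 2 = 0 := by have := hentry 0 2; simp at this; exact cancel _ (by linarith)
    have h03 : S'' 0 3 = 0 := by have := hentry 0 3; simp at this; exact cancel _ (by linarith)
    have h12 : S'' 1 2 = 0 := by have := hentry 1 2; simp at this; exact cancel _ (by linarith)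
    have h13 : S'' 1 3 = 0 := by have := hentry 1 3; simp at this; exact cancel _ (by linarith)
    have hsym' : ∀ i j : Fin 4, S'' i j = S'' j i := by
      intro i j
      conv_lhs => rw [← hS''sym]
      rfl
    have h20 : S'' 2 0 = 0 := by rw [hsym' 2 0]; exact h02
    have h21 : S'' 2 1 = 0 := by rw [hsym' 2 1]; exact h12
    have h30 : S'' 3 0 = 0 := by rw [hsym' 3 0]; exact h03
    have h31 : S'' 3 1 = 0 := by rw [hsym' 3 1]; exact h13
    by_cases hb1 : ∀ w : Fin 4 → ℝ, w 2 = 0 → w 3 = 0 → 0 ≤ w ⬝ᵥ S'' *ᵥ w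
    · -- block 1 nonnegative: N' is ≤ 0 on span(e0,e1)
      apply key N' (U * S' * P⁻¹) hdetW2 hW2 ![(1:ℝ),0,0,0] ![(0:ℝ),1,0,0]
      · intro a b hab
        constructor
        · have := congrFun hab 0; simpa using this
        · have := congrFun hab 1; simpa using this
      · intro a b
        have hw2 : (a • ![(1:ℝ),0,0,0] + b • ![(0:ℝ),1,0,0]) 2 = 0 := by simp
        have hw3 : (a • ![(1:ℝ),0,0,0] + b • ![(0:ℝ),1,0,0]) 3 = 0 := by simp
        rw [hqN' u _ (hDu _ hw2 hw3)]
        have := hb1 _ hw2 hw3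
        nlinarith
    · by_cases hb2 : ∀ w : Fin 4 → ℝ, w 0 = 0 → w 1 = 0 → 0 ≤ w ⬝ᵥ S'' *ᵥ w
      · apply key N' (U * S' * P⁻¹) hdetW2 hW2 ![(0:ℝ),0,1,0] ![(0:ℝ),0,0,1]
        · intro a b hab
          constructor
          · have := congrFun hab 2; simpa using this
          · have := congrFun hab 3; simpa using this
        · intro a b
          have hw0 : (a • ![(0:ℝ),0,1,0] + b • ![(0:ℝ),0,0,1]) 0 = 0 := by simp
          have hw1 : (a • ![(0:ℝ),0,1,0] + b • ![(0:ℝ),0,0,1]) 1 = 0 := by simp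
          rw [hqN' v _ (hDv _ hw0 hw1)]
          have := hb2 _ hw0 hw1
          nlinarith
      · -- both blocks have negative vectors: contradicts S'' Minkowski
        push_neg at hb1 hb2
        obtain ⟨x, hx2, hx3, hqx⟩ := hb1
        obtain ⟨y, hy0, hy1, hqy⟩ := hb2
        have hcross : x ⬝ᵥ S'' *ᵥ y = 0 := by
          simp [dotProduct, Matrix.mulVec, Fin.sum_univ_four, hx2, hx3, hy0, hy1,
            h02, h03, h12, h13]
        have hcross' : y ⬝ᵥ S'' *ᵥ x = 0 := by
          simp [dotProduct, Matrix.mulVec, Fin.sum_univ_four, hx2, hx3, hy0, hy1,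
            h20, h21, h30, h31]
        have hxne : x ≠ 0 := by
          intro h
          rw [h] at hqx
          simp at hqx
        have hyne : y ≠ 0 := by
          intro h
          rw [h] at hqy
          simp at hqy
        have hx01 : x 0 ≠ 0 ∨ x 1 ≠ 0 := by
          by_contra h
          push_neg at h
          apply hxne
          funext i
          fin_cases i <;> simp [h.1, h.2, hx2, hx3]
        have hy23 : y 2 ≠ 0 ∨ y 3 ≠ 0 := by
          by_contra h
          push_neg at h
          apply hyne
          funext i
          fin_cases i <;> simp [h.1, h.2, hy0, hy1]
        apply key S'' (V * P⁻¹) hdetW1 hW1 x y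
        · intro a b hab
          constructor
          · rcases hx01 with h | h
            · have := congrFun hab 0
              simp [hy0] at this
              rcases this with h' | h'
              · exact h'
              · exact absurd h' h
            · have := congrFun hab 1
              simp [hy1] at this
              rcases this with h' | h'
              · exact h'
              · exact absurd h' h
          · rcases hy23 with h | h
            · have := congrFun hab 2
              simp [hx2] at this
              rcases this with h' | h'
              · exact h'
              · exact absurd h' h
            · have := congrFun hab 3
              simp [hx3] at this
              rcases this with h' | h'
              · exact h'
              · exact absurd h' h
        · intro a b
          have hexp : (a • x + b • y) ⬝ᵥ S'' *ᵥ (a • x + b • y)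
              = a * a * (x ⬝ᵥ S'' *ᵥ x) + a * b * (x ⬝ᵥ S'' *ᵥ y)
                + b * a * (y ⬝ᵥ S'' *ᵥ x) + b * b * (y ⬝ᵥ S'' *ᵥ y) := by
            simp [Matrix.mulVec_add, Matrix.mulVec_smul, dotProduct_add,
              add_dotProduct, dotProduct_smul, smul_dotProduct,
              smul_eq_mul]
            ring
          rw [hexp, hcross, hcross']
          nlinarith [sq_nonneg a, sq_nonneg b]
end

section
/- No invertible real 4×4 matrix A = SS', with S and S' symmetric of Lorentzian signature (−,+,+,+), is similar to the Jordan matrix consisting of two 2×2 Jordan blocks with the same eigenvalue −u (u > 0), i.e., J₅ = diag(J₂(−u), J₂(−u)) where J₂(−u) = [[−u,1],[0,−u]]. -/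
/-!
Since `S` and `S'` are symmetric, so is `S' (S S')`. Writing `S S' = P⁻¹ J P`, the Gram matrix
`K = P⁻ᵀ S' P⁻¹` of `S'` in the basis given by the columns of `P⁻¹` then makes `K J` symmetric,
and comparing the entries `(0,1)`, `(0,3)`, `(2,3)` of `K J` with their transposes gives
`K₀₀ = K₀₂ = K₂₂ = 0`: the first and third basis vectors span a totally isotropic plane of `S'`.
A form of signature `(−,+,+,+)` has no such plane, because the spatial parts of two orthogonal
null vectors attain equality in the Cauchy–Schwarz inequality and hence are proportional.
-/

open Matrix

def minkowskiMetric (n : ℕ) : Matrix (Fin (n + 1)) (Fin (n + 1)) ℝ :=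
  diagonal (Fin.cons (-1) 1)

lemma minkowskiMetric_three : minkowskiMetric 3 = diagonal ![-1, 1, 1, 1] := by
  rw [minkowskiMetric]
  congr 1
  ext i
  fin_cases i <;> rfl

lemma cons_dotProduct_minkowskiMetric_mulVec_cons {n : ℕ} (a b : ℝ) (x y : Fin n → ℝ) :
    Fin.cons a x ⬝ᵥ minkowskiMetric n *ᵥ Fin.cons b y = -(a * b) + x ⬝ᵥ y := by
  simp [minkowskiMetric, mulVec_diagonal, dotProduct, Fin.sum_univ_succ]

lemma not_linearIndependent_of_minkowski_isotropic {n : ℕ} {x y : Fin (n + 1) → ℝ}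
    (hx : x ⬝ᵥ minkowskiMetric n *ᵥ x = 0) (hxy : x ⬝ᵥ minkowskiMetric n *ᵥ y = 0)
    (hy : y ⬝ᵥ minkowskiMetric n *ᵥ y = 0) : ¬LinearIndependent ℝ ![x, y] := by
  intro hind
  obtain ⟨a, x, rfl⟩ : ∃ a x, Fin.cons a x = _ := ⟨_, _, Fin.cons_self_tail x⟩
  obtain ⟨b, y, rfl⟩ : ∃ b y, Fin.cons b y = _ := ⟨_, _, Fin.cons_self_tail y⟩
  simp only [cons_dotProduct_minkowskiMetric_mulVec_cons] at hx hxy hy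
  -- `|b x - a y|² = a²b² - 2(ab)² + a²b² = 0`
  have hcomb : b • x - a • y = 0 := by
    rw [← dotProduct_self_eq_zero]
    simp only [sub_dotProduct, dotProduct_sub, smul_dotProduct, dotProduct_smul, smul_eq_mul,
      dotProduct_comm y x]
    linear_combination b ^ 2 * hx - 2 * a * b * hxy + a ^ 2 * hy
  obtain ⟨hb, ha⟩ := LinearIndependent.pair_iff.mp hind b (-a) <| by
    ext i
    refine Fin.cases ?_ (fun i => ?_) i
    · simp only [Pi.add_apply, Pi.smul_apply, Fin.cons_zero, smul_eq_mul, Pi.zero_apply]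
      ring
    · simpa [sub_eq_add_neg] using congrFun hcomb i
  rw [neg_eq_zero] at ha
  subst ha hb
  have : x = 0 := dotProduct_self_eq_zero.mp (by linarith)
  subst this
  exact hind.ne_zero 0 Matrix.cons_zero_zero

lemma transpose_mul_mul_apply {R m n : Type*} [Fintype m] [CommSemiring R]
    (Q : Matrix m n R) (A : Matrix m m R) (i j : n) :
    (Qᵀ * A * Q) i j = Q.col i ⬝ᵥ A *ᵥ Q.col j := by
  rw [Matrix.mul_assoc, mul_apply']
  rfl

lemma not_isotropic_pair_of_isUnit_det {n : ℕ} {Q : Matrix (Fin (n + 1)) (Fin (n + 1)) ℝ}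
    (hQ : IsUnit Q.det) {i j : Fin (n + 1)} (hij : i ≠ j) :
    ¬((Qᵀ * minkowskiMetric n * Q) i i = 0 ∧ (Qᵀ * minkowskiMetric n * Q) i j = 0 ∧
      (Qᵀ * minkowskiMetric n * Q) j j = 0) := by
  simp only [transpose_mul_mul_apply]
  rintro ⟨hi, hij', hj⟩
  refine not_linearIndependent_of_minkowski_isotropic hi hij' hj ?_
  have hpair : ![Q.col i, Q.col j] = Q.col ∘ ![i, j] := by
    ext k : 1
    fin_cases k <;> rfl
  rw [hpair]
  exact (linearIndependent_cols_of_isUnit ((isUnit_iff_isUnit_det Q).mpr hQ)).comp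
    ![i, j] (injective_pair_iff_ne.mpr hij)

section Symmetric

variable {R n : Type*} [CommRing R] [Fintype n]

lemma isSymm_mul_mul_of_isSymm {S T : Matrix n n R} (hS : S.IsSymm) (hT : T.IsSymm) :
    (T * (S * T)).IsSymm := by
  simp only [IsSymm, transpose_mul, hS.eq, hT.eq, Matrix.mul_assoc]

lemma isSymm_transpose_mul_mul {M : Matrix n n R} (A : Matrix n n R) (hM : M.IsSymm) :
    (Aᵀ * M * A).IsSymm := by
  simp only [IsSymm, transpose_mul, transpose_transpose, hM.eq, Matrix.mul_assoc]

lemma isSymm_congr_mul_of_isSymm_mul_conj [DecidableEq n] {K J P : Matrix n n R}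
    (hP : IsUnit P.det) (h : (K * (P⁻¹ * J * P)).IsSymm) : (P⁻¹ᵀ * K * P⁻¹ * J).IsSymm := by
  convert isSymm_transpose_mul_mul P⁻¹ h using 1
  simp only [Matrix.mul_assoc, mul_nonsing_inv_cancel_right _ _ hP]

end Symmetric

lemma eq_zero_of_isSymm_mul_jordanPair {R : Type*} [CommRing R] (c : R)
    {K : Matrix (Fin 4) (Fin 4) R} (hK : K.IsSymm)
    (hKJ : (K * !![c, 1, 0, 0; 0, c, 0, 0; 0, 0, c, 1; 0, 0, 0, c]).IsSymm) :
    K 0 0 = 0 ∧ K 0 2 = 0 ∧ K 2 2 = 0 := by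
  have e01 := hKJ.apply 0 1
  have e03 := hKJ.apply 0 3
  have e23 := hKJ.apply 2 3
  simp only [Fin.isValue, mul_apply, of_apply, cons_val', cons_val_zero, cons_val_fin_one,
    Fin.sum_univ_four, cons_val_one, mul_zero, add_zero, cons_val, mul_one, zero_add] at e01 e03 e23
  exact ⟨by linear_combination -e01 + c * hK.apply 0 1,
    by linear_combination -e03 + c * hK.apply 0 3, by linear_combination -e23 + c * hK.apply 2 3⟩

theorem stmt_19_general (u : ℝ)
    (S S' P : Matrix (Fin 4) (Fin 4) ℝ)
    (hS : Sᵀ = S)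
    (hS' : S'ᵀ = S')
    (hS'sig : ∃ V : Matrix (Fin 4) (Fin 4) ℝ, IsUnit V.det ∧
      S' = Vᵀ * Matrix.diagonal ![(-1 : ℝ), 1, 1, 1] * V)
    (hP : IsUnit P.det) :
    S * S' ≠ P⁻¹ * !![-u, 1, 0, 0; 0, -u, 0, 0; 0, 0, -u, 1; 0, 0, 0, -u] * P := by
  intro h
  obtain ⟨V, hV, hS'V⟩ := hS'sig
  have hKJ := isSymm_congr_mul_of_isSymm_mul_conj hP (h ▸ isSymm_mul_mul_of_isSymm hS hS')
  have hK : P⁻¹ᵀ * S' * P⁻¹ = (V * P⁻¹)ᵀ * minkowskiMetric 3 * (V * P⁻¹) := by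
    simp only [hS'V, minkowskiMetric_three, transpose_mul, Matrix.mul_assoc]
  have hQ : IsUnit (V * P⁻¹).det := by
    rw [det_mul]
    exact hV.mul (isUnit_nonsing_inv_det P hP)
  rw [hK] at hKJ
  exact not_isotropic_pair_of_isUnit_det hQ (by decide : (0 : Fin 4) ≠ 2)
    (eq_zero_of_isSymm_mul_jordanPair (-u) (isSymm_transpose_mul_mul _ (isSymm_diagonal _)) hKJ)

theorem stmt_19 (u : ℝ) (hu : 0 < u)
    (S S' P : Matrix (Fin 4) (Fin 4) ℝ)
    (hS : Sᵀ = S) (hSinv : IsUnit S.det)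
    (hS' : S'ᵀ = S') (hS'inv : IsUnit S'.det)
    (hSsig : ∃ U : Matrix (Fin 4) (Fin 4) ℝ, IsUnit U.det ∧
      S = Uᵀ * Matrix.diagonal ![(-1 : ℝ), 1, 1, 1] * U)
    (hS'sig : ∃ V : Matrix (Fin 4) (Fin 4) ℝ, IsUnit V.det ∧
      S' = Vᵀ * Matrix.diagonal ![(-1 : ℝ), 1, 1, 1] * V)
    (hP : IsUnit P.det) :
    S * S' ≠ P⁻¹ * !![-u, 1, 0, 0; 0, -u, 0, 0; 0, 0, -u, 1; 0, 0, 0, -u] * P :=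
  stmt_19_general u S S' P hS hS' hS'sig hP
end
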